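/- arXiv:1507.07065 — 3 statements merged into one kernel-verified Lean document; each statement's English description precedes it below -/
import Mathlib

section
/- Let n ≥ 4 and let e = {a,b}, f = {c,d} be two disjoint (non-adjacent) edges of K_n. For each r with 4 ≤ r ≤ n, the set of r-cycles containing both e and f admits a fixed-point-free involution which, for any assignment of a sign to each ordered traversal of the pair (e,f) that is antisymmetric under reversing the relative orientation, pairs each cycle with one of opposite sign. Consequently the number of r-cycles of K_n containing two fixed non-adjacent edges is even. -/
/-
The transposition `σ = (c d)` of the endpoints of `f = s(c, d)` acts on edge sets. On a cycle
`… a b … c d …` it reverses the arc between `e` and `f`, giving `… a b … d c …`: it fixes `e`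
(which avoids `c` and `d`) and `f`, sends `r`-cycles to `r`-cycles, and is an involution. A cycle
whose edge set `σ` fixes would contain, along with `c`'s second cycle neighbour `z`, the edge
`s(d, z)`, hence the triangle `c d z`; so its length is `3`, which is excluded by `r ≥ 4`. A finite
set carrying a fixed-point-free involution has even cardinality.
-/

open SimpleGraph

/-- The set of (unoriented) cycles of length `r` in `G`, each cycle represented
by its edge set. -/
def cycleSet {V : Type*} [DecidableEq V] (G : SimpleGraph V) (r : ℕ) :
    Set (Finset (Sym2 V)) :=
  {E | ∃ (v : V) (w : G.Walk v v), w.IsCycle ∧ w.length = r ∧ w.edges.toFinset = E}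

theorem Function.Involutive.even_natCard_of_forall_ne {α : Type*} [Finite α] {f : α → α}
    (hf : Function.Involutive f) (hfix : ∀ x, f x ≠ x) : Even (Nat.card α) := by
  classical
  have := Fintype.ofFinite α
  have hmod := Equiv.Perm.card_fixedPoints_modEq (f := (f : Function.End α)) (p := 2) (n := 1)
    (funext hf)
  have : IsEmpty (Function.fixedPoints f) := ⟨fun x => hfix x x.2⟩
  rw [Fintype.card_eq_zero (α := Function.fixedPoints f)] at hmod
  rw [Nat.card_eq_fintype_card, even_iff_two_dvd]
  exact Nat.modEq_zero_iff_dvd.1 hmod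

namespace SimpleGraph.Walk.IsCycle

variable {V : Type*} {G : SimpleGraph V} {u x y z : V} {p : G.Walk u u}

lemma length_eq_three_of_adj_snd_penultimate (hp : p.IsCycle)
    (h : p.toSubgraph.Adj p.snd p.penultimate) : p.length = 3 := by
  have h3 := hp.three_le_length
  have hnbr : p.penultimate ∈ p.toSubgraph.neighborSet (p.getVert 1) := h
  rw [hp.neighborSet_toSubgraph_internal one_ne_zero (by omega)] at hnbr
  rcases hnbr with h0 | h2
  · rw [Nat.sub_self, getVert_zero] at h0
    have := (hp.getVert_endpoint_iff (i := p.length - 1) (by omega)).1 h0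
    omega
  · have := hp.getVert_injOn (by simp; omega) (by simp; omega) h2
    omega

lemma length_eq_three_of_adj_of_adj_of_adj (hp : p.IsCycle) (hx : p.toSubgraph.Adj u x)
    (hy : p.toSubgraph.Adj u y) (hxy : p.toSubgraph.Adj x y) : p.length = 3 := by
  have hnbr (w) (hw : p.toSubgraph.Adj u w) : w = p.snd ∨ w = p.penultimate := by
    have hw' : w ∈ p.toSubgraph.neighborSet u := hw
    rwa [hp.neighborSet_toSubgraph_endpoint] at hw'
  rcases hnbr x hx with rfl | rfl <;> rcases hnbr y hy with rfl | rfl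
  · exact absurd rfl hxy.ne
  · exact hp.length_eq_three_of_adj_snd_penultimate hxy
  · exact hp.length_eq_three_of_adj_snd_penultimate hxy.symm
  · exact absurd rfl hxy.ne

lemma length_eq_three_of_triangle [DecidableEq V] (hp : p.IsCycle) (hxy : p.toSubgraph.Adj x y)
    (hxz : p.toSubgraph.Adj x z) (hyz : p.toSubgraph.Adj y z) : p.length = 3 := by
  have hx : x ∈ p.support := mem_support_of_adj_toSubgraph hxy
  rw [← length_rotate p x hx]
  rw [← toSubgraph_rotate p hx] at hxy hxz hyz
  exact (hp.rotate hx).length_eq_three_of_adj_of_adj_of_adj hxy hxz hyz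

end SimpleGraph.Walk.IsCycle

section cycleSet

variable {V : Type*} [DecidableEq V] {G : SimpleGraph V} {r : ℕ} {E : Finset (Sym2 V)}

lemma image_map_mem_cycleSet {W : Type*} [DecidableEq W] {G' : SimpleGraph W} (f : G ↪g G')
    (hE : E ∈ cycleSet G r) : E.image (Sym2.map f) ∈ cycleSet G' r := by
  obtain ⟨v, p, hp, rfl, rfl⟩ := hE
  refine ⟨f v, p.map f.toHom, hp.map f.injective, p.length_map _, ?_⟩
  ext
  simp [Walk.edges_map]

lemma image_map_swap_ne_of_mem_cycleSet (hE : E ∈ cycleSet G r) (hr : 4 ≤ r) {c d : V}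
    (hcd : s(c, d) ∈ E) : E.image (Sym2.map (Equiv.swap c d)) ≠ E := by
  obtain ⟨v, p, hp, rfl, rfl⟩ := hE
  intro hfix
  have hadj {x y : V} : p.toSubgraph.Adj x y ↔ s(x, y) ∈ p.edges.toFinset := by
    rw [List.mem_toFinset, Walk.adj_toSubgraph_iff_mem_edges]
  have hcd' := hadj.2 hcd
  obtain ⟨z, hdz, hcz⟩ := hp.isCycles_spanningCoe_toSubgraph.other_adj_of_adj hcd'
  have hdz' : p.toSubgraph.Adj d z := by
    rw [hadj, ← hfix]
    refine Finset.mem_image.2 ⟨s(c, z), hadj.1 hcz, ?_⟩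
    rw [Sym2.map_mk, Equiv.swap_apply_left, Equiv.swap_apply_of_ne_of_ne hcz.ne.symm hdz.symm]
  have := hp.length_eq_three_of_triangle hcd' hcz hdz'
  omega

end cycleSet

theorem nonadjacent_edges_involution_general (n : ℕ)
    (e f : Sym2 (Fin n))
    (hdisj : ∀ v : Fin n, ¬(v ∈ e ∧ v ∈ f))
    (r : ℕ) (hr : 4 ≤ r) :
    (∃ φ : {E ∈ cycleSet (⊤ : SimpleGraph (Fin n)) r | e ∈ E ∧ f ∈ E} →
           {E ∈ cycleSet (⊤ : SimpleGraph (Fin n)) r | e ∈ E ∧ f ∈ E},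
      Function.Involutive φ ∧ ∀ x, φ x ≠ x) ∧
    Even {E ∈ cycleSet (⊤ : SimpleGraph (Fin n)) r | e ∈ E ∧ f ∈ E}.ncard := by
  induction f using Sym2.ind with | _ c d => ?_
  set σ := Equiv.swap c d
  have hσe : Sym2.map σ e = e := by
    induction e using Sym2.ind with | _ a b => ?_
    have hfix (v) (hv : v ∈ s(a, b)) : σ v = v := by
      have : v ≠ c ∧ v ≠ d := by simpa using hdisj v ∘ And.intro hv
      exact Equiv.swap_apply_of_ne_of_ne this.1 this.2
    rw [Sym2.map_mk, hfix a (Sym2.mem_mk_left a b), hfix b (Sym2.mem_mk_right a b)]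
  have hσf : Sym2.map σ s(c, d) = s(c, d) := by
    rw [Sym2.map_mk, Equiv.swap_apply_left, Equiv.swap_apply_right, Sym2.eq_swap]
  have hσσ (E : Finset (Sym2 (Fin n))) : (E.image (Sym2.map σ)).image (Sym2.map σ) = E := by
    rw [Finset.image_image, ← Sym2.map_comp,
      Function.Involutive.comp_self (Equiv.swap_apply_self c d), Sym2.map_id, Finset.image_id]
  set S := {E ∈ cycleSet (⊤ : SimpleGraph (Fin n)) r | e ∈ E ∧ s(c, d) ∈ E}
  have hS (E) (hE : E ∈ S) : E.image (Sym2.map σ) ∈ S :=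
    ⟨image_map_mem_cycleSet (Iso.completeGraph σ).toEmbedding hE.1,
      Finset.mem_image.2 ⟨e, hE.2.1, hσe⟩, Finset.mem_image.2 ⟨s(c, d), hE.2.2, hσf⟩⟩
  let φ : S → S := fun E => ⟨_, hS E E.2⟩
  have hφ : Function.Involutive φ := fun E => Subtype.ext (hσσ E)
  have hφfix (E : S) : φ E ≠ E := fun h =>
    image_map_swap_ne_of_mem_cycleSet E.2.1 hr E.2.2.2 (congrArg Subtype.val h)
  exact ⟨⟨φ, hφ, hφfix⟩, Nat.card_coe_set_eq S ▸ hφ.even_natCard_of_forall_ne hφfix⟩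

/-- For non-adjacent (disjoint) edges `e, f` of `K_n` (`n ≥ 4`) and `4 ≤ r ≤ n`,
the set of `r`-cycles containing both `e` and `f` admits a fixed-point-free
involution; consequently the number of such cycles is even. -/
theorem nonadjacent_edges_involution (n : ℕ) (hn : 4 ≤ n)
    (e f : Sym2 (Fin n))
    (he : e ∈ (⊤ : SimpleGraph (Fin n)).edgeSet)
    (hf : f ∈ (⊤ : SimpleGraph (Fin n)).edgeSet)
    (hdisj : ∀ v : Fin n, ¬(v ∈ e ∧ v ∈ f))
    (r : ℕ) (hr : 4 ≤ r) (hrn : r ≤ n) :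
    (∃ φ : {E ∈ cycleSet (⊤ : SimpleGraph (Fin n)) r | e ∈ E ∧ f ∈ E} →
           {E ∈ cycleSet (⊤ : SimpleGraph (Fin n)) r | e ∈ E ∧ f ∈ E},
      Function.Involutive φ ∧ ∀ x, φ x ≠ x) ∧
    Even {E ∈ cycleSet (⊤ : SimpleGraph (Fin n)) r | e ∈ E ∧ f ∈ E}.ncard :=
  nonadjacent_edges_involution_general n e f hdisj r hr
end

section
/- Let c_r = (2(s_r²−1))/3 − (r−2)s_r with s_r = 2^{⌊log₂(r−2)⌋}. For every even k = 2k₁ ≥ 6, we have c_k = 2 + 4·c_{k₁+1}. -/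
/-- `s_r = 2^⌊log₂(r-2)⌋`, the largest power of 2 not exceeding `r - 2`. -/
def sval (r : ℕ) : ℚ := 2 ^ (Nat.log 2 (r - 2))

/-- `c_r = 2(s_r² - 1)/3 - (r-2)s_r`. -/
def cval (r : ℕ) : ℚ := 2 * ((sval r) ^ 2 - 1) / 3 - ((r : ℚ) - 2) * sval r

/-- For every even `k = 2k₁ ≥ 6`, `c_k = 2 + 4 c_{k₁+1}`. -/
theorem cval_even (k₁ : ℕ) (h : 3 ≤ k₁) :
    cval (2 * k₁) = 2 + 4 * cval (k₁ + 1) := by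
  have hs : sval (2 * k₁) = 2 * sval (k₁ + 1) := by
    unfold sval
    have h1 : 2 * k₁ - 2 = 2 * (k₁ - 1) := by omega
    have h2 : k₁ + 1 - 2 = k₁ - 1 := by omega
    rw [h1, h2, mul_comm 2 (k₁ - 1), Nat.log_mul_base (by norm_num) (by omega), pow_succ]
    ring
  unfold cval
  rw [hs]
  push_cast
  ring
end

section
/- Let c_r = (2(s_r²−1))/3 − (r−2)s_r with s_r = 2^{⌊log₂(r−2)⌋}. For every odd k = 2k₁+1 ≥ 7, we have c_k = 2 + 2·c_{k₁+1} + 2·c_{k₁+2}. -/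
/-- For every odd `k = 2k₁ + 1 ≥ 7`, `c_k = 2 + 2 c_{k₁+1} + 2 c_{k₁+2}`. -/
theorem cval_odd (k₁ : ℕ) (h : 3 ≤ k₁) :
    cval (2 * k₁ + 1) = 2 + 2 * cval (k₁ + 1) + 2 * cval (k₁ + 2) := by
  set t := Nat.log 2 k₁ with ht
  have h1 : 2 ^ t ≤ k₁ := Nat.pow_log_le_self 2 (by omega)
  have h2 : k₁ < 2 ^ (t + 1) := Nat.lt_pow_succ_log_self (by norm_num) k₁
  have e3 : k₁ + 1 - 2 = k₁ - 1 := by omega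
  have e4 : k₁ + 2 - 2 = k₁ := by omega
  have e5 : 2 * k₁ + 1 - 2 = 2 * k₁ - 1 := by omega
  by_cases hp : k₁ = 2 ^ t
  · -- k₁ is a power of two
    have ht2 : 2 ≤ t := by
      by_contra hc
      interval_cases t <;> omega
    obtain ⟨u, hu⟩ : ∃ u, t = u + 1 := ⟨t - 1, by omega⟩
    have hd : 2 ^ (u + 1) = 2 * 2 ^ u := by ring
    have l1 : Nat.log 2 (k₁ - 1) = u := by
      apply Nat.log_eq_of_pow_le_of_lt_pow
      · rw [hu] at hp; omega
      · rw [hu] at hp; omega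
    have l2 : Nat.log 2 (2 * k₁ - 1) = t := by
      apply Nat.log_eq_of_pow_le_of_lt_pow
      · have : 2 ^ t < 2 ^ (t + 1) := Nat.pow_lt_pow_right (by norm_num) (by omega)
        omega
      · have : 2 * k₁ = 2 ^ (t + 1) := by rw [hp]; ring
        omega
    have hk : (k₁ : ℚ) = 2 * 2 ^ u := by
      rw [hp, hu]; push_cast [pow_succ]; ring
    unfold cval sval
    rw [e3, e4, e5, l1, l2, ht.symm, hp.symm] at *
    rw [hu]
    push_cast [pow_succ]
    rw [hk]
    ring
  · -- 2^t < k₁ < 2^(t+1)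
    have h1' : 2 ^ t < k₁ := by omega
    have l1 : Nat.log 2 (k₁ - 1) = t := by
      apply Nat.log_eq_of_pow_le_of_lt_pow <;> omega
    have l2 : Nat.log 2 (2 * k₁ - 1) = t + 1 := by
      apply Nat.log_eq_of_pow_le_of_lt_pow
      · have : 2 ^ (t + 1) = 2 * 2 ^ t := by ring
        omega
      · have : 2 ^ (t + 2) = 2 * 2 ^ (t + 1) := by ring
        omega
    unfold cval sval
    rw [e3, e4, e5, l1, l2, ht.symm]
    push_cast [pow_succ]
    ring
end
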